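/- arXiv:1011.2789 — 6 statements merged into one kernel-verified Lean document; each statement's English description precedes it below -/
import Mathlib

section
/- Let p be an odd prime, γ a p̄-core with part set X_γ, and 1 ≤ j ≤ p−1. If the set X_j of parts of γ congruent to j mod p is nonempty, then X_j = {j, j+p, j+2p, ..., j+d_j p} for some d_j ≥ 0; that is, X_j consists of consecutive terms of the arithmetic progression starting at j with common difference p. -/
open Finset Nat

/-- The multiset of unmixed bar lengths (types 1 and 2) of a bar partition with
part set `X`: values `y - x` over pairs `0 ≤ x < y` with `x ∉ X`, `y ∈ X`. -/
def unmixedBars (X : Finset ℕ) : Multiset ℕ :=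
  X.val.bind fun y => (((Finset.range y).filter (fun x => x ∉ X)).val.map (fun x => y - x))

/-- The multiset of mixed bar lengths (type 3): `a + b` over pairs of parts `b < a`. -/
def mixedBars (X : Finset ℕ) : Multiset ℕ :=
  ((X ×ˢ X).filter (fun q => q.1 < q.2)).val.map (fun q => q.1 + q.2)

/-- The multiset of all bar lengths of the bar partition with part set `X`. -/
def barLengths (X : Finset ℕ) : Multiset ℕ := unmixedBars X + mixedBars X

/-- The product of all bar lengths. -/
def barProd (X : Finset ℕ) : ℕ := (barLengths X).prod

/-- A bar partition is a `p̄`-core if it has no bar of length divisible by `p`. -/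
def IsBarCore (p : ℕ) (X : Finset ℕ) : Prop := ∀ l ∈ barLengths X, ¬ p ∣ l

/-- The `p̄`-weight: the number of bars of length divisible by `p`. -/
def barWeight (p : ℕ) (X : Finset ℕ) : ℕ := ((barLengths X).filter (p ∣ ·)).card

/-- One step of removing a bar of length divisible by `p` from the bar partition
with part set `X`. -/
inductive PBarStep (p : ℕ) : Finset ℕ → Finset ℕ → Prop
  | unmixed (X : Finset ℕ) (x y : ℕ) (hxy : x < y) (hy : y ∈ X) (hx : x ∉ X)
      (hdvd : p ∣ (y - x)) : PBarStep p X ((insert x (X.erase y)).erase 0)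
  | mixed (X : Finset ℕ) (a b : ℕ) (ha : a ∈ X) (hb : b ∈ X) (hba : b < a)
      (hdvd : p ∣ (a + b)) : PBarStep p X ((X.erase a).erase b)

/-- If the set of parts of a `p̄`-core congruent to `j` mod `p` is nonempty, then
it equals `{j, j + p, ..., j + d·p}` for some `d ≥ 0`. -/
theorem stmt5 (p : ℕ) (hp : p.Prime) (hodd : Odd p) (X : Finset ℕ) (h0 : 0 ∉ X)
    (hcore : IsBarCore p X) (j : ℕ) (hj1 : 1 ≤ j) (hj2 : j ≤ p - 1)
    (hne : (X.filter (fun a => a % p = j)).Nonempty) :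
    ∃ d : ℕ, X.filter (fun a => a % p = j)
      = (Finset.range (d + 1)).image (fun k => j + k * p) := by
  classical
  have hp0 : 0 < p := hp.pos
  have hp2 : 2 ≤ p := hp.two_le
  have hjp : j < p := by omega
  set S := X.filter (fun a => a % p = j) with hS
  have hmS : S.max' hne ∈ S := S.max'_mem hne
  set m := S.max' hne with hm
  have hmX : m ∈ X := (Finset.mem_filter.mp hmS).1
  have hmj : m % p = j := (Finset.mem_filter.mp hmS).2
  have hm_eq : m = j + (m / p) * p := by
    have := Nat.div_add_mod m p
    rw [hmj, mul_comm] at this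
    omega
  refine ⟨m / p, ?_⟩
  have key : ∀ k, k ≤ m / p → j + k * p ∈ X := by
    intro k hk
    by_contra hnot
    have hxm : j + k * p < m := by
      rcases lt_or_eq_of_le hk with h | h
      · have h1 : k * p < (m / p) * p := (Nat.mul_lt_mul_right hp0).mpr h
        omega
      · exact absurd hmX (by rw [h, ← hm_eq] at hnot; exact hnot)
    have hbar : m - (j + k * p) ∈ barLengths X := by
      unfold barLengths unmixedBars
      rw [Multiset.mem_add]
      left
      rw [Multiset.mem_bind]
      refine ⟨m, Finset.mem_val.mpr hmX, Multiset.mem_map.mpr ⟨j + k * p, ?_, rfl⟩⟩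
      rw [Finset.mem_val, Finset.mem_filter, Finset.mem_range]
      exact ⟨hxm, hnot⟩
    have hdvd : p ∣ m - (j + k * p) := by
      refine ⟨m / p - k, ?_⟩
      have h1 : (m / p - k) * p = (m / p) * p - k * p := Nat.sub_mul _ _ _
      have h2 : k * p ≤ (m / p) * p := Nat.mul_le_mul_right p hk
      rw [mul_comm p]
      omega
    exact hcore _ hbar hdvd
  rw [hS]
  ext a
  simp only [Finset.mem_filter, Finset.mem_image, Finset.mem_range]
  constructor
  · rintro ⟨haX, haj⟩
    have ham : a ≤ m := S.le_max' a (Finset.mem_filter.mpr ⟨haX, haj⟩)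
    have hdle : a / p ≤ m / p := Nat.div_le_div_right ham
    refine ⟨a / p, by omega, ?_⟩
    have := Nat.div_add_mod a p
    rw [haj, mul_comm] at this
    have : a = j + (a / p) * p := by omega
    omega
  · rintro ⟨k, hk, rfl⟩
    refine ⟨key k (by omega), ?_⟩
    simp [Nat.add_mul_mod_self_right, Nat.mod_eq_of_lt hjp]
end

section
/- Let p be an odd prime, γ a nonempty p̄-core of weight-0, and w ≥ 1. Define λ_0^(w) to be the bar partition whose part set is X_γ ∪ {pw}. Then λ_0^(w) is a bar partition of |γ| + pw whose p̄-core is γ and whose p̄-weight (number of bars of length divisible by p) is exactly w. -/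
open Finset Nat

/-- The `p̄`-weight of `insert (p*w) X` for a `p̄`-core `X` is `w`. -/
lemma barWeight_insert (p w : ℕ) (hp : p.Prime) (X : Finset ℕ)
    (hcore : IsBarCore p X) (hnd : ∀ y ∈ X, ¬ p ∣ y) (hpwX : p * w ∉ X) :
    barWeight p (insert (p * w) X) = w := by
  set X' := insert (p*w) X with hX'
  have hval : X'.val = (p*w) ::ₘ X.val := Finset.insert_val_of_notMem hpwX
  set f : ℕ → Multiset ℕ := fun y =>
    (((Finset.range y).filter (fun x => x ∉ X')).val.map (fun x => y - x)) with hf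
  have hum : unmixedBars X' = f (p*w) + X.val.bind f := by
    rw [unmixedBars, hval, Multiset.cons_bind]
  have hmix : (mixedBars X').filter (p ∣ ·) = 0 := by
    rw [Multiset.filter_eq_nil]
    intro l hl
    simp only [mixedBars, Multiset.mem_map, Finset.mem_val, Finset.mem_filter,
      Finset.mem_product, hX', Finset.mem_insert] at hl
    obtain ⟨⟨a, b⟩, ⟨⟨ha, hb⟩, hab⟩, rfl⟩ := hl
    rcases ha with rfl | ha <;> rcases hb with rfl | hb
    · omega
    · intro hd
      exact hnd b hb ((Nat.dvd_add_right ⟨w, rfl⟩).1 hd)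
    · intro hd
      rw [Nat.add_comm] at hd
      exact hnd a ha ((Nat.dvd_add_right ⟨w, rfl⟩).1 hd)
    · exact hcore _ (Multiset.mem_add.2 (Or.inr (by
        simp only [mixedBars, Multiset.mem_map, Finset.mem_val, Finset.mem_filter,
          Finset.mem_product]
        exact ⟨(a,b), ⟨⟨ha, hb⟩, hab⟩, rfl⟩)))
  have hrest : ((X.val.bind f).filter (p ∣ ·)) = 0 := by
    rw [Multiset.filter_eq_nil]
    intro l hl
    simp only [Multiset.mem_bind, Multiset.mem_map, Finset.mem_val, Finset.mem_filter,
      Finset.mem_range, hf, hX', Finset.mem_insert, not_or] at hl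
    obtain ⟨y, hy, x, ⟨hxy, hxpw, hxX⟩, rfl⟩ := hl
    refine hcore _ (Multiset.mem_add.2 (Or.inl ?_))
    simp only [unmixedBars, Multiset.mem_bind, Multiset.mem_map, Finset.mem_val,
      Finset.mem_filter, Finset.mem_range]
    exact ⟨y, hy, x, ⟨hxy, hxX⟩, rfl⟩
  have hmain : ((f (p*w)).filter (p ∣ ·)).card = w := by
    rw [hf]
    rw [Multiset.filter_map]
    rw [Multiset.card_map]
    have : Multiset.filter ((p ∣ ·) ∘ fun x => p*w - x)
        ((Finset.range (p*w)).filter (fun x => x ∉ X')).val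
        = (((Finset.range (p*w)).filter (fun x => x ∉ X')).filter
            (fun x => p ∣ p*w - x)).val := rfl
    rw [this, ← Finset.card]
    have hset : ((Finset.range (p*w)).filter (fun x => x ∉ X')).filter (fun x => p ∣ p*w - x)
        = (Finset.range w).image (fun k => p * k) := by
      ext x
      simp only [Finset.mem_filter, Finset.mem_range, Finset.mem_image, hX',
        Finset.mem_insert, not_or]
      constructor
      · rintro ⟨⟨hx, -, -⟩, hd⟩
        have hx' : p ∣ x := by
          have := Nat.dvd_sub (Dvd.intro w rfl) hd
          rwa [Nat.sub_sub_self (le_of_lt hx)] at this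
        obtain ⟨k, rfl⟩ := hx'
        exact ⟨k, Nat.lt_of_mul_lt_mul_left hx, rfl⟩
      · rintro ⟨k, hk, rfl⟩
        have hlt : p * k < p * w := Nat.mul_lt_mul_left hp.pos |>.2 hk
        refine ⟨⟨hlt, Nat.ne_of_lt hlt, fun h => hnd _ h ⟨k, rfl⟩⟩,
          Nat.dvd_sub ⟨w, rfl⟩ ⟨k, rfl⟩⟩
    rw [hset, Finset.card_image_of_injective _ (fun a b h => Nat.eq_of_mul_eq_mul_left hp.pos h),
      Finset.card_range]
  rw [barWeight, barLengths, Multiset.filter_add, hum, Multiset.filter_add, hrest, hmix,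
    Multiset.card_add, Multiset.card_add, hmain]
  simp

/-- For a nonempty `p̄`-core `γ` and `w ≥ 1`, the bar partition `λ₀⁽ʷ⁾` with part
set `X_γ ∪ {pw}` is a bar partition of `|γ| + pw` with `p̄`-core `γ` and
`p̄`-weight exactly `w`. -/
theorem stmt6 (p w : ℕ) (hp : p.Prime) (hodd : Odd p) (X : Finset ℕ) (h0 : 0 ∉ X)
    (hne : X.Nonempty) (hcore : IsBarCore p X) (hw : 1 ≤ w) :
    (insert (p * w) X).sum id = X.sum id + p * w ∧
    Relation.ReflTransGen (PBarStep p) (insert (p * w) X) X ∧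
    barWeight p (insert (p * w) X) = w := by
  have hppos : 0 < p := hp.pos
  have hpw : 0 < p * w := Nat.mul_pos hppos hw
  -- every element of X is a bar length (via x = 0)
  have hmem : ∀ y ∈ X, y ∈ barLengths X := by
    intro y hy
    have hy0 : 0 < y := Nat.pos_of_ne_zero (fun h => h0 (h ▸ hy))
    have : y ∈ unmixedBars X := by
      simp only [unmixedBars, Multiset.mem_bind, Multiset.mem_map, Finset.mem_val,
        Finset.mem_filter, Finset.mem_range]
      exact ⟨y, hy, 0, ⟨hy0, h0⟩, rfl⟩
    exact Multiset.mem_add.2 (Or.inl this)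
  have hnd : ∀ y ∈ X, ¬ p ∣ y := fun y hy => hcore y (hmem y hy)
  have hpwX : p * w ∉ X := fun h => hnd _ h ⟨w, rfl⟩
  refine ⟨?_, ?_, ?_⟩
  · rw [Finset.sum_insert hpwX]; simp [add_comm]
  · have heq : ((insert 0 (((insert (p*w) X)).erase (p*w))).erase 0) = X := by
      rw [Finset.erase_insert hpwX, Finset.erase_insert h0]
    have hx0 : 0 ∉ insert (p*w) X := by
      intro h
      rcases Finset.mem_insert.1 h with h | h
      · omega
      · exact h0 h
    have step := PBarStep.unmixed (insert (p*w) X) 0 (p*w) hpw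
      (Finset.mem_insert_self _ _) hx0 (by simpa using ⟨w, rfl⟩)
    rw [heq] at step
    exact Relation.ReflTransGen.single step
  · exact barWeight_insert p w hp X hcore hnd hpwX
end

section
/- Let p be an odd prime, γ a p̄-core, 1 ≤ i ≤ p−1 with the set X_i of parts of γ congruent to i mod p nonempty, e_i its maximal element, and w ≥ 1. Then the bar partition λ_i^(w) with part set (X_γ \ {e_i}) ∪ {e_i + pw} is a bar partition of |γ| + pw with p̄-core γ and p̄-weight exactly w, and moreover every bar of λ_i^(w) of length divisible by p arises from a pair (x, y) with 0 < x < y, x ∉ X_{λ_i^(w)}, y ∈ X_{λ_i^(w)} (i.e., is of 'type 1'). -/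
open Finset Nat

lemma mem_unmixedBars {X : Finset ℕ} {x y : ℕ} (hxy : x < y) (hy : y ∈ X) (hx : x ∉ X) :
    y - x ∈ unmixedBars X := by
  unfold unmixedBars
  rw [Multiset.mem_bind]
  refine ⟨y, Finset.mem_val.mpr hy, Multiset.mem_map.mpr ⟨x, ?_, rfl⟩⟩
  rw [Finset.mem_val, Finset.mem_filter, Finset.mem_range]
  exact ⟨hxy, hx⟩

lemma mem_mixedBars {X : Finset ℕ} {a b : ℕ} (ha : a ∈ X) (hb : b ∈ X) (hba : b < a) :
    b + a ∈ mixedBars X := by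
  unfold mixedBars
  refine Multiset.mem_map.mpr ⟨(b, a), ?_, rfl⟩
  rw [Finset.mem_val, Finset.mem_filter, Finset.mem_product]
  exact ⟨⟨hb, ha⟩, hba⟩

/-- For a `p̄`-core `γ` with parts in class `i` mod `p` (largest such part `e`),
and `w ≥ 1`, the bar partition `λᵢ⁽ʷ⁾` with part set `(X_γ \ {e}) ∪ {e + pw}` is a
bar partition of `|γ| + pw` with `p̄`-core `γ` and `p̄`-weight exactly `w`, all of
whose bars of length divisible by `p` are of type 1 (unmixed with `x > 0`). -/
theorem stmt7 (p w i : ℕ) (hp : p.Prime) (hodd : Odd p) (X : Finset ℕ) (h0 : 0 ∉ X)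
    (hcore : IsBarCore p X) (hi1 : 1 ≤ i) (hi2 : i ≤ p - 1)
    (hne : (X.filter (fun a => a % p = i)).Nonempty) (hw : 1 ≤ w)
    (e : ℕ) (he : e = (X.filter (fun a => a % p = i)).sup id) :
    (insert (e + p * w) (X.erase e)).sum id = X.sum id + p * w ∧
    Relation.ReflTransGen (PBarStep p) (insert (e + p * w) (X.erase e)) X ∧
    barWeight p (insert (e + p * w) (X.erase e)) = w ∧
    (∀ y ∈ insert (e + p * w) (X.erase e), ¬ p ∣ y) ∧
    (∀ a ∈ insert (e + p * w) (X.erase e), ∀ b ∈ insert (e + p * w) (X.erase e),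
      b < a → ¬ p ∣ (a + b)) := by
  have hp3 : 3 ≤ p := by
    have h2 := hp.two_le
    have h3 := Nat.odd_iff.mp hodd
    omega
  have hip : i < p := by omega
  obtain ⟨e', he'mem, he'⟩ := Finset.exists_mem_eq_sup _ hne id
  obtain rfl : e = e' := he.trans he'
  rw [Finset.mem_filter] at he'mem
  have heX : e ∈ X := he'mem.1
  have hei : e % p = i := he'mem.2
  have he1 : 1 ≤ e := Nat.pos_of_ne_zero (fun h => h0 (h ▸ heX))
  have hU : ∀ y ∈ X, ∀ x, x < y → x ∉ X → ¬ p ∣ (y - x) := fun y hy x hxy hx =>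
    hcore _ (Multiset.mem_add.mpr (Or.inl (mem_unmixedBars hxy hy hx)))
  have hM : ∀ a ∈ X, ∀ b ∈ X, b < a → ¬ p ∣ (b + a) := fun a ha b hb hba =>
    hcore _ (Multiset.mem_add.mpr (Or.inr (mem_mixedBars ha hb hba)))
  have hXnd : ∀ y ∈ X, ¬ p ∣ y := by
    intro y hy hdvd
    have hy0 : 0 < y := Nat.pos_of_ne_zero (fun h => h0 (h ▸ hy))
    exact hU y hy 0 hy0 h0 (by simpa using hdvd)
  have hmax : ∀ a ∈ X, a % p = i → a ≤ e := by
    intro a ha hai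
    rw [he]
    exact Finset.le_sup (f := id) (Finset.mem_filter.mpr ⟨ha, hai⟩)
  have hchain : ∀ x, x % p = i → x ≤ e → x ∈ X := by
    intro x hx hxe
    rcases Nat.lt_or_ge x e with hlt | hge
    · by_contra hxX
      exact hU e heX x hlt hxX ((Nat.modEq_iff_dvd' hlt.le).mp (hx.trans hei.symm))
    · have hxe' : x = e := by omega
      rwa [hxe']
  have hpw : 0 < p * w := Nat.mul_pos (by omega) hw
  have hmodpw : (e + p * w) % p = i := by rw [Nat.add_mul_mod_self_left]; exact hei
  have hnew : e + p * w ∉ X := fun h => by have := hmax _ h hmodpw; omega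
  set X' := insert (e + p * w) (X.erase e) with hX'
  have hmem' : ∀ z, z ∈ X' ↔ z = e + p * w ∨ (z ∈ X ∧ z ≠ e) := by
    intro z
    rw [hX', Finset.mem_insert, Finset.mem_erase]
    tauto
  have hnotmem : e + p * w ∉ X.erase e := fun h => hnew (Finset.mem_of_mem_erase h)
  -- part 4
  have part4 : ∀ y ∈ X', ¬ p ∣ y := by
    intro y hy hdvd
    rcases (hmem' y).mp hy with rfl | ⟨hyX, _⟩
    · have h2 := Nat.dvd_sub hdvd ⟨w, rfl⟩
      have h3 : e + p * w - p * w = e := by omega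
      rw [h3] at h2
      exact hXnd e heX h2
    · exact hXnd y hyX hdvd
  -- part 5
  have part5 : ∀ a ∈ X', ∀ b ∈ X', b < a → ¬ p ∣ (a + b) := by
    intro a ha b hb hba hdvd
    rcases (hmem' a).mp ha with rfl | ⟨haX, hae⟩
    · rcases (hmem' b).mp hb with rfl | ⟨hbX, hbe⟩
      · omega
      · have hbe' : ¬ p ∣ (b + e) := by
          rcases Nat.lt_or_ge b e with h | h
          · exact hM e heX b hbX h
          · intro hd
            exact hM b hbX e heX (by omega) (by rwa [add_comm] at hd)
        have h2 := Nat.dvd_sub hdvd ⟨w, rfl⟩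
        have h3 : e + p * w + b - p * w = b + e := by omega
        rw [h3] at h2
        exact hbe' h2
    · rcases (hmem' b).mp hb with rfl | ⟨hbX, hbe⟩
      · have h2 := Nat.dvd_sub hdvd ⟨w, rfl⟩
        have h3 : a + (e + p * w) - p * w = e + a := by omega
        rw [h3] at h2
        exact hM a haX e heX (by omega) h2
      · exact hM a haX b hbX hba (by rwa [add_comm] at hdvd)
  -- part 1
  have part1 : X'.sum id = X.sum id + p * w := by
    rw [hX', Finset.sum_insert hnotmem]
    have h2 : ∑ x ∈ X.erase e, id x + id e = ∑ x ∈ X, id x := Finset.sum_erase_add X id heX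
    simp only [id] at h2 ⊢
    omega
  -- part 2
  have hstep : ∀ k, PBarStep p (insert (e + p * (k + 1)) (X.erase e))
      (insert (e + p * k) (X.erase e)) := by
    intro k
    have hmul : p * (k + 1) = p * k + p := by ring
    have hxnot : e + p * k ∉ insert (e + p * (k + 1)) (X.erase e) := by
      intro h
      rcases Finset.mem_insert.mp h with h | h
      · omega
      · have h1 := Finset.mem_of_mem_erase h
        have h2 := (Finset.mem_erase.mp h).1
        have h3 : (e + p * k) % p = i := by rw [Nat.add_mul_mod_self_left]; exact hei
        have h4 := hmax _ h1 h3
        rcases Nat.eq_zero_or_pos k with rfl | hk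
        · simp at h2
        · have : p * 1 ≤ p * k := Nat.mul_le_mul_left p hk
          omega
    have hynot : e + p * (k + 1) ∉ X.erase e := by
      intro h
      have h1 := Finset.mem_of_mem_erase h
      have h4 := hmax _ h1 (by rw [Nat.add_mul_mod_self_left]; exact hei)
      omega
    have hdvd : p ∣ (e + p * (k + 1) - (e + p * k)) := ⟨1, by omega⟩
    have hs := PBarStep.unmixed (insert (e + p * (k + 1)) (X.erase e)) (e + p * k)
      (e + p * (k + 1)) (by omega) (Finset.mem_insert_self _ _) hxnot hdvd
    have hset : ((insert (e + p * k)
        ((insert (e + p * (k + 1)) (X.erase e)).erase (e + p * (k + 1)))).erase 0)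
        = insert (e + p * k) (X.erase e) := by
      rw [Finset.erase_insert hynot]
      apply Finset.erase_eq_of_notMem
      intro h
      rcases Finset.mem_insert.mp h with h | h
      · omega
      · exact h0 (Finset.mem_of_mem_erase h)
    rwa [hset] at hs
  have part2 : Relation.ReflTransGen (PBarStep p) X' X := by
    have key : ∀ k, Relation.ReflTransGen (PBarStep p) (insert (e + p * k) (X.erase e)) X := by
      intro k
      induction k with
      | zero =>
        rw [mul_zero, add_zero, Finset.insert_erase heX]
      | succ n ih => exact Relation.ReflTransGen.head (hstep n) ih
    exact key w
  -- part 3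
  have hcount : ∀ y : ℕ, (Multiset.filter (p ∣ ·)
      ((((Finset.range y).filter (fun x => x ∉ X')).val.map (fun x => y - x)))).card =
      ((Finset.range y).filter (fun x => x ∉ X' ∧ p ∣ (y - x))).card := by
    intro y
    rw [Multiset.filter_map, Multiset.card_map, ← Finset.filter_val, Finset.filter_filter]
    rfl
  have hnobar : ∀ y ∈ X.erase e, ∀ x, x < y → x ∉ X' → ¬ p ∣ (y - x) := by
    intro y hy x hx hxX' hdvd
    have hyX := Finset.mem_of_mem_erase hy
    by_cases hxX : x ∈ X
    · have hxe : x = e := by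
        by_contra hne'
        exact hxX' ((hmem' x).mpr (Or.inr ⟨hxX, hne'⟩))
      subst hxe
      have hym : x % p = y % p := (Nat.modEq_iff_dvd' hx.le).mpr hdvd
      have := hmax y hyX (by rw [← hym, hei])
      omega
    · exact hU y hyX x hx hxX hdvd
  have hinj : Function.Injective (fun k => e + p * k) := by
    intro a b hab
    simp only at hab
    have h2 : p * a = p * b := by omega
    exact Nat.eq_of_mul_eq_mul_left (by omega) h2
  have himg : (Finset.range (e + p * w)).filter (fun x => x ∉ X' ∧ p ∣ (e + p * w - x))
      = (Finset.range w).image (fun k => e + p * k) := by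
    ext x
    simp only [Finset.mem_filter, Finset.mem_range, Finset.mem_image]
    constructor
    · rintro ⟨hlt, hxX', hdvd⟩
      have hxm : x % p = i := by
        have h2 : x % p = (e + p * w) % p := (Nat.modEq_iff_dvd' hlt.le).mpr hdvd
        rw [h2, hmodpw]
      by_cases hxX : x ∈ X
      · have hxe : x = e := by
          by_contra hne'
          exact hxX' ((hmem' x).mpr (Or.inr ⟨hxX, hne'⟩))
        exact ⟨0, hw, by omega⟩
      · have hgt : e < x := by
          by_contra hle
          exact hxX (hchain x hxm (by omega))
        obtain ⟨k, hk⟩ := (Nat.modEq_iff_dvd' hgt.le).mp (hei.trans hxm.symm)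
        have hkw : p * k < p * w := by omega
        exact ⟨k, Nat.lt_of_mul_lt_mul_left hkw, by omega⟩
    · rintro ⟨k, hkw, rfl⟩
      have hlt : p * k < p * w := by
        have h1 : p * (k + 1) ≤ p * w := Nat.mul_le_mul_left p hkw
        have h2 : p * (k + 1) = p * k + p := by ring
        omega
      refine ⟨by omega, ?_, ?_⟩
      · intro hmem
        rcases (hmem' _).mp hmem with h | ⟨hX2, hne2⟩
        · omega
        · have h4 := hmax _ hX2 (by rw [Nat.add_mul_mod_self_left]; exact hei)
          rcases Nat.eq_zero_or_pos k with rfl | hk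
          · exact hne2 (by omega)
          · have : p * 1 ≤ p * k := Nat.mul_le_mul_left p hk
            omega
      · refine ⟨w - k, ?_⟩
        have h5 : p * k + p * (w - k) = p * w := by
          rw [← Nat.mul_add]
          congr 1
          omega
        omega
  have hwcard : ((Finset.range (e + p * w)).filter
      (fun x => x ∉ X' ∧ p ∣ (e + p * w - x))).card = w := by
    rw [himg, Finset.card_image_of_injective _ hinj, Finset.card_range]
  have part3 : barWeight p X' = w := by
    unfold barWeight barLengths
    rw [Multiset.filter_add, Multiset.card_add]
    have hmix : Multiset.filter (p ∣ ·) (mixedBars X') = 0 := by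
      rw [Multiset.filter_eq_nil]
      intro l hl
      unfold mixedBars at hl
      rw [Multiset.mem_map] at hl
      obtain ⟨q, hq, rfl⟩ := hl
      rw [Finset.mem_val, Finset.mem_filter, Finset.mem_product] at hq
      exact fun hd => part5 q.2 hq.1.2 q.1 hq.1.1 hq.2 (by rwa [add_comm] at hd)
    rw [hmix]
    simp only [Multiset.card_zero, add_zero]
    unfold unmixedBars
    have hval : X'.val = (e + p * w) ::ₘ (X.erase e).val := by
      rw [hX']
      exact Finset.insert_val_of_notMem hnotmem
    rw [hval, Multiset.cons_bind, Multiset.filter_add, Multiset.card_add]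
    have hrest : Multiset.filter (p ∣ ·) ((X.erase e).val.bind fun y =>
        (((Finset.range y).filter (fun x => x ∉ X')).val.map (fun x => y - x))) = 0 := by
      rw [Multiset.filter_eq_nil]
      intro l hl
      rw [Multiset.mem_bind] at hl
      obtain ⟨y, hy, hl⟩ := hl
      rw [Multiset.mem_map] at hl
      obtain ⟨x, hx, rfl⟩ := hl
      rw [Finset.mem_val, Finset.mem_filter, Finset.mem_range] at hx
      exact hnobar y hy x hx.1 hx.2
    rw [hrest]
    simp only [Multiset.card_zero, add_zero]
    rw [hcount (e + p * w)]
    exact hwcard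
  exact ⟨part1, part2, part3, part4, part5⟩
end

section
/- Let p be an odd prime and i with 0 < i < p, and let γ = (i) be the single-part bar partition. For w ≥ 2, let λ_i^(w) = (pw + i) and λ_0^(w) = (pw, i). Then H̄(λ_i^(w)) / H̄(λ_0^(w)) equals (pw − 1) if i = 1 and (pw+1)(pw−2)/2 if i = 2; in particular, when p = 3 and w ≥ 2, H̄(λ_i^(w)) > 2·H̄(λ_0^(w)) for i ∈ {1, 2}. -/
open Finset Nat

lemma mprod (s : Finset ℕ) (f : ℕ → ℕ) : (s.val.map f).prod = s.prod f := rfl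

lemma prodsub (m : ℕ) : ∏ x ∈ range m, (m - x) = m ! := by
  induction m with
  | zero => simp
  | succ n ih =>
      rw [Finset.prod_range_succ']
      simp only [Nat.succ_sub_succ, Nat.sub_zero, ih, factorial_succ]
      ring

lemma barProd_singleton (m : ℕ) : barProd {m} = m ! := by
  have h1 : (range m).filter (fun x => x ∉ ({m} : Finset ℕ)) = range m := by
    apply Finset.filter_true_of_mem
    intro x hx
    simp only [Finset.mem_singleton]
    exact fun h => absurd hx (by simp [h])
  have h2 : mixedBars {m} = 0 := by
    have : (({m} : Finset ℕ) ×ˢ {m}).filter (fun q => q.1 < q.2) = ∅ := by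
      rw [Finset.singleton_product_singleton, Finset.filter_singleton]
      simp
    rw [mixedBars, this]; rfl
  rw [barProd, barLengths, Multiset.prod_add, h2, Multiset.prod_zero, mul_one,
    unmixedBars, Finset.singleton_val, Multiset.singleton_bind, h1, mprod, prodsub]

lemma barProd_pair {n i : ℕ} (h : i < n) : barProd {n, i} * (n - i) = n ! * i ! * (n + i) := by
  have hne : n ≠ i := h.ne'
  have hfn : (range n).filter (fun x => x ∉ ({n, i} : Finset ℕ)) = (range n).erase i := by
    ext x
    simp [Finset.mem_erase, Finset.mem_filter, Finset.mem_range]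
    omega
  have hfi : (range i).filter (fun x => x ∉ ({n, i} : Finset ℕ)) = range i := by
    apply Finset.filter_true_of_mem
    intro x hx
    simp only [Finset.mem_insert, Finset.mem_singleton, Finset.mem_range] at *
    omega
  have hmix : (({n, i} : Finset ℕ) ×ˢ {n, i}).filter (fun q => q.1 < q.2) = {(i, n)} := by
    ext q
    simp [Finset.mem_filter, Finset.mem_product, Prod.ext_iff]
    constructor
    · rintro ⟨⟨h1 | h1, h2 | h2⟩, hlt⟩ <;> omega
    · rintro ⟨h1, h2⟩; omega
  have hval : ({n, i} : Finset ℕ).val = n ::ₘ {i} := by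
    rw [Finset.insert_val, Finset.singleton_val, Multiset.ndinsert_of_notMem (by simp [hne])]
  have hub : (unmixedBars {n, i}).prod = (∏ x ∈ (range n).erase i, (n - x)) * i ! := by
    rw [unmixedBars, hval, Multiset.cons_bind, Multiset.singleton_bind, Multiset.prod_add,
      hfn, hfi, mprod, mprod, prodsub]
  have hmb : (mixedBars {n, i}).prod = i + n := by
    rw [mixedBars, hmix]; simp
  rw [barProd, barLengths, Multiset.prod_add, hub, hmb]
  have key : (n - i) * ∏ x ∈ (range n).erase i, (n - x) = n ! := by
    rw [Finset.mul_prod_erase (range n) (fun x => n - x) (Finset.mem_range.2 h), prodsub]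
  calc (∏ x ∈ (range n).erase i, (n - x)) * i ! * (i + n) * (n - i)
      = ((n - i) * ∏ x ∈ (range n).erase i, (n - x)) * i ! * (i + n) := by ring
    _ = n ! * i ! * (n + i) := by rw [key, Nat.add_comm i n]

/-- For `γ = (i)` with `0 < i < p` and `w ≥ 2`: `H̄((pw+1)) = (pw-1)·H̄((pw,1))`,
`2·H̄((pw+2)) = (pw+1)(pw-2)·H̄((pw,2))`; in particular, when `p = 3`,
`H̄((pw+i)) > 2·H̄((pw,i))` for `i ∈ {1, 2}`. -/
theorem stmt11 (p w : ℕ) (hp : p.Prime) (hodd : Odd p) (hw : 2 ≤ w) :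
    barProd {p * w + 1} = barProd {p * w, 1} * (p * w - 1) ∧
    barProd {p * w + 2} * 2 = barProd {p * w, 2} * ((p * w + 1) * (p * w - 2)) ∧
    (p = 3 → ∀ i ∈ ({1, 2} : Finset ℕ),
      barProd {p * w + i} > 2 * barProd {p * w, i}) := by
  set n := p * w with hn
  have hp3 : 3 ≤ p := by
    have := hp.two_le
    have := Nat.odd_iff.mp hodd
    omega
  have hn6 : 6 ≤ n := le_trans (by norm_num) (Nat.mul_le_mul hp3 hw)
  have e1 : barProd {n, 1} * (n - 1) = n ! * 1 ! * (n + 1) := barProd_pair (by omega)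
  have e2 : barProd {n, 2} * (n - 2) = n ! * 2 ! * (n + 2) := barProd_pair (by omega)
  have f1 : barProd {n + 1} = barProd {n, 1} * (n - 1) := by
    rw [barProd_singleton, e1, factorial_succ]
    simp [factorial]
    ring
  have f2 : barProd {n + 2} * 2 = barProd {n, 2} * ((n + 1) * (n - 2)) := by
    have : barProd {n, 2} * ((n + 1) * (n - 2)) = (barProd {n, 2} * (n - 2)) * (n + 1) := by
      ring
    rw [barProd_singleton, this, e2]
    show (n + 1 + 1) * ((n + 1) * n !) * 2 = _
    simp [factorial]
    ring
  refine ⟨f1, f2, fun _ i hi => ?_⟩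
  have hb1 : 0 < barProd {n, 1} := by
    rcases Nat.eq_zero_or_pos (barProd {n, 1}) with h | h
    · rw [h, zero_mul] at e1
      exact absurd e1.symm (by positivity)
    · exact h
  have hb2 : 0 < barProd {n, 2} := by
    rcases Nat.eq_zero_or_pos (barProd {n, 2}) with h | h
    · rw [h, zero_mul] at e2
      exact absurd e2.symm (by positivity)
    · exact h
  simp only [Finset.mem_insert, Finset.mem_singleton] at hi
  rcases hi with rfl | rfl
  · rw [f1]
    have : 2 < n - 1 := by omega
    calc 2 * barProd {n, 1} < (n - 1) * barProd {n, 1} :=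
          (Nat.mul_lt_mul_right hb1).mpr this
      _ = barProd {n, 1} * (n - 1) := Nat.mul_comm _ _
  · have h28 : 28 ≤ (n + 1) * (n - 2) := by
      calc 28 = 7 * 4 := by norm_num
        _ ≤ (n + 1) * (n - 2) := Nat.mul_le_mul (by omega) (by omega)
    nlinarith [f2, hb2]
end

section
/- Let p be an odd prime and γ a nonempty p̄-core all of whose parts are congruent to a fixed i mod p (1 ≤ i ≤ p−1), with largest part e_i. For every w ≥ 1, the product of bar lengths satisfies H̄(λ_i^(w)) > H̄(λ_0^(w)), where λ_i^(w) has part set (X_γ \ {e_i}) ∪ {e_i + pw} and λ_0^(w) has part set X_γ ∪ {pw}. -/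
open Finset Nat

namespace S15


def sprod (S : Finset ℕ) : ℕ := ∏ y ∈ S, ∏ x ∈ S, if x < y then x + y else 1
def dprod (S : Finset ℕ) : ℕ := ∏ y ∈ S, ∏ x ∈ S, if x < y then y - x else 1
def fprod (S : Finset ℕ) : ℕ := ∏ y ∈ S, y !

lemma sprod_pos (S : Finset ℕ) : 0 < sprod S :=
  prod_pos fun y _ => prod_pos fun x _ => by split <;> omega

lemma dprod_pos (S : Finset ℕ) : 0 < dprod S :=
  prod_pos fun y _ => prod_pos fun x _ => by split <;> omega

lemma fprod_pos (S : Finset ℕ) : 0 < fprod S :=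
  prod_pos fun y _ => Nat.factorial_pos y

lemma mixed_prod (S : Finset ℕ) : (mixedBars S).prod = sprod S := by
  have h0 : (mixedBars S).prod = ∏ q ∈ (S ×ˢ S).filter (fun q => q.1 < q.2), (q.1 + q.2) := rfl
  rw [h0, Finset.prod_filter, Finset.prod_product_right]
  rfl

lemma prod_range_fact (n : ℕ) : ∏ x ∈ range n, (x + 1) = n ! := by
  induction n with
  | zero => simp
  | succ n ih => rw [prod_range_succ, ih, Nat.factorial_succ]; ring

lemma prod_range_sub (y : ℕ) : ∏ x ∈ range y, (y - x) = y ! := by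
  rw [← prod_range_fact y, ← Finset.prod_range_reflect (fun x => x + 1) y]
  exact Finset.prod_congr rfl fun x hx => by rw [mem_range] at hx; omega

lemma row (S : Finset ℕ) (y : ℕ) :
    (∏ x ∈ (range y).filter (fun x => x ∉ S), (y - x)) *
      (∏ x ∈ S, if x < y then y - x else 1) = y ! := by
  have h1 : (∏ x ∈ S, if x < y then y - x else 1) = ∏ x ∈ S.filter (· < y), (y - x) :=
    (Finset.prod_filter _ _).symm
  have h2 : S.filter (· < y) = (range y).filter (fun x => ¬ x ∉ S) := by
    ext x; simp [mem_range, and_comm]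
  rw [h1, h2, mul_comm, Finset.prod_filter_not_mul_prod_filter, prod_range_sub]

lemma unmixed_prod (S : Finset ℕ) : (unmixedBars S).prod * dprod S = fprod S := by
  have h0 : (unmixedBars S).prod
      = ∏ y ∈ S, ∏ x ∈ (range y).filter (fun x => x ∉ S), (y - x) := by
    rw [unmixedBars, Multiset.prod_bind]
    rfl
  rw [h0, dprod, ← Finset.prod_mul_distrib]
  exact Finset.prod_congr rfl fun y _ => row S y

lemma barProd_formula (S : Finset ℕ) : barProd S * dprod S = fprod S * sprod S := by
  rw [barProd, barLengths, Multiset.prod_add, mul_comm (unmixedBars S).prod, mul_assoc,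
    unmixed_prod, mixed_prod, mul_comm]

lemma pair_insert (f : ℕ → ℕ → ℕ) (g : ℕ → ℕ) (a : ℕ) (S : Finset ℕ) (ha : a ∉ S)
    (hg : ∀ x ∈ S, (if x < a then f x a else 1) * (if a < x then f a x else 1) = g x) :
    (∏ y ∈ insert a S, ∏ x ∈ insert a S, if x < y then f x y else 1)
      = (∏ y ∈ S, ∏ x ∈ S, if x < y then f x y else 1) * ∏ x ∈ S, g x := by
  rw [Finset.prod_insert ha]
  have h1 : ∀ y, (∏ x ∈ insert a S, if x < y then f x y else 1)
      = (if a < y then f a y else 1) * ∏ x ∈ S, if x < y then f x y else 1 :=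
    fun y => Finset.prod_insert ha
  rw [h1, if_neg (lt_irrefl a), one_mul,
    Finset.prod_congr rfl (fun y _ => h1 y), Finset.prod_mul_distrib]
  rw [show (∏ x ∈ S, if x < a then f x a else 1) *
      ((∏ y ∈ S, if a < y then f a y else 1) * ∏ y ∈ S, ∏ x ∈ S, if x < y then f x y else 1)
      = ((∏ y ∈ S, ∏ x ∈ S, if x < y then f x y else 1)) *
        ((∏ x ∈ S, if x < a then f x a else 1) * (∏ x ∈ S, if a < x then f a x else 1)) by ring,
    ← Finset.prod_mul_distrib, Finset.prod_congr rfl hg]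

lemma sprod_insert (a : ℕ) (S : Finset ℕ) (ha : a ∉ S) :
    sprod (insert a S) = sprod S * ∏ x ∈ S, (x + a) := by
  refine pair_insert _ _ a S ha fun x hx => ?_
  have hxa : x ≠ a := fun h => ha (h ▸ hx)
  rcases lt_trichotomy x a with h | h | h
  · rw [if_pos h, if_neg (by omega)]; ring
  · exact absurd h hxa
  · rw [if_neg (by omega), if_pos h]; ring

lemma dprod_insert (a : ℕ) (S : Finset ℕ) (ha : a ∉ S) :
    dprod (insert a S) = dprod S * ∏ x ∈ S, Nat.dist x a := by
  refine pair_insert _ _ a S ha fun x hx => ?_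
  have hxa : x ≠ a := fun h => ha (h ▸ hx)
  rcases lt_trichotomy x a with h | h | h
  · rw [if_pos h, if_neg (by omega)]; simp [Nat.dist]; omega
  · exact absurd h hxa
  · rw [if_neg (by omega), if_pos h]; simp [Nat.dist]; omega

lemma fprod_insert (a : ℕ) (S : Finset ℕ) (ha : a ∉ S) :
    fprod (insert a S) = a ! * fprod S := Finset.prod_insert ha



def P1 (p i n m : ℕ) : ℕ := ∏ j ∈ range n, (i + p*j + (i + p*n) + m)
def P2 (p i n m : ℕ) : ℕ := ∏ j ∈ range n, (p*(j+1) + m)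
def P3 (p i n m : ℕ) : ℕ := ∏ j ∈ range (n+1), (i + p*j + m)
def DD (p i n m : ℕ) : ℕ := ∏ j ∈ range (n+1), Nat.dist (i + p*j) m
def Lf (p i n m : ℕ) : ℕ := (i + p*n + m)! * P1 p i n m * P2 p i n 0 * DD p i n m
def Rf (p i n m : ℕ) : ℕ := (i + p*n)! * m ! * P1 p i n 0 * P3 p i n m * P2 p i n m

lemma shift_prod (g : ℕ → ℕ) (n : ℕ) :
    (∏ j ∈ range n, g (j+1)) * g 0 = (∏ j ∈ range n, g j) * g n := by
  rw [← Finset.prod_range_succ', Finset.prod_range_succ]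

lemma fact_shift (a b : ℕ) : (a + b)! = a ! * ∏ t ∈ range b, (a + 1 + t) := by
  induction b with
  | zero => simp
  | succ b ih =>
      rw [prod_range_succ, show a + (b+1) = (a+b)+1 by omega, Nat.factorial_succ, ih]; ring

lemma P1_shift (p i n m : ℕ) :
    P1 p i n (m+p) * (i + (i + p*n) + m) = P1 p i n m * ((i + p*n) + (i + p*n) + m) := by
  have h : (∏ j ∈ range n, (i + p*(j+1) + (i + p*n) + m)) * (i + p*0 + (i + p*n) + m)
      = (∏ j ∈ range n, (i + p*j + (i + p*n) + m)) * (i + p*n + (i + p*n) + m) :=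
    shift_prod (fun j => i + p*j + (i + p*n) + m) n
  have h1 : P1 p i n (m+p) = ∏ j ∈ range n, (i + p*(j+1) + (i + p*n) + m) :=
    Finset.prod_congr rfl fun j _ => by ring
  calc P1 p i n (m+p) * (i + (i + p*n) + m)
      = (∏ j ∈ range n, (i + p*(j+1) + (i + p*n) + m)) * (i + p*0 + (i + p*n) + m) := by
        rw [h1]; ring
    _ = (∏ j ∈ range n, (i + p*j + (i + p*n) + m)) * (i + p*n + (i + p*n) + m) := h
    _ = P1 p i n m * ((i + p*n) + (i + p*n) + m) := by unfold P1; ring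

lemma P2_shift (p i n m : ℕ) :
    P2 p i n (m+p) * (p + m) = P2 p i n m * (p*(n+1) + m) := by
  have h : (∏ j ∈ range n, (p*(j+1+1) + m)) * (p*(0+1) + m)
      = (∏ j ∈ range n, (p*(j+1) + m)) * (p*(n+1) + m) :=
    shift_prod (fun j => p*(j+1) + m) n
  have h1 : P2 p i n (m+p) = ∏ j ∈ range n, (p*(j+1+1) + m) :=
    Finset.prod_congr rfl fun j _ => by ring
  calc P2 p i n (m+p) * (p + m)
      = (∏ j ∈ range n, (p*(j+1+1) + m)) * (p*(0+1) + m) := by rw [h1]; ring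
    _ = (∏ j ∈ range n, (p*(j+1) + m)) * (p*(n+1) + m) := h
    _ = P2 p i n m * (p*(n+1) + m) := by unfold P2; ring

lemma P3_shift (p i n m : ℕ) :
    P3 p i n (m+p) * (i + m) = P3 p i n m * (i + p*(n+1) + m) := by
  have h : (∏ j ∈ range (n+1), (i + p*(j+1) + m)) * (i + p*0 + m)
      = (∏ j ∈ range (n+1), (i + p*j + m)) * (i + p*(n+1) + m) :=
    shift_prod (fun j => i + p*j + m) (n+1)
  have h1 : P3 p i n (m+p) = ∏ j ∈ range (n+1), (i + p*(j+1) + m) :=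
    Finset.prod_congr rfl fun j _ => by ring
  calc P3 p i n (m+p) * (i + m)
      = (∏ j ∈ range (n+1), (i + p*(j+1) + m)) * (i + p*0 + m) := by rw [h1]; ring
    _ = (∏ j ∈ range (n+1), (i + p*j + m)) * (i + p*(n+1) + m) := h
    _ = P3 p i n m * (i + p*(n+1) + m) := by unfold P3; ring

lemma DD_shift (p i n m : ℕ) (hip : i ≤ p) :
    DD p i n (m+p) * Nat.dist (i + p*n) m = DD p i n m * (m + (p - i)) := by
  have hterm : ∀ j, Nat.dist (i + p*(j+1)) (m+p) = Nat.dist (i + p*j) m := fun j => by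
    rw [show i + p*(j+1) = (i + p*j) + p by ring, Nat.dist_add_add_right]
  have h1 : DD p i n (m+p) = (∏ j ∈ range n, Nat.dist (i + p*j) m) * (m + (p - i)) := by
    rw [DD, Finset.prod_range_succ']
    congr 1
    · exact Finset.prod_congr rfl fun j _ => hterm j
    · rw [show i + p*0 = i by ring, Nat.dist_eq_sub_of_le (by omega)]; omega
  have h2 : DD p i n m = (∏ j ∈ range n, Nat.dist (i + p*j) m) * Nat.dist (i + p*n) m := by
    rw [DD, Finset.prod_range_succ]
  rw [h1, h2]; ring

lemma resid (p i e m : ℕ) (hp3 : 3 ≤ p) (hodd : Odd p) (hi1 : 1 ≤ i) (hi2 : i < p)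
    (he : 1 ≤ e) :
    (∏ t ∈ range p, (m + 1 + t)) * ((e + p + m) * ((e + (p - i) + m) * ((i + e + m) * Nat.dist e m)))
    < (∏ t ∈ range p, (e + m + 1 + t)) * ((e + e + m) * ((m + (p - i)) * ((p + m) * (i + m)))) := by
  obtain ⟨c, hc⟩ := hodd
  have h1 : p - 1 ∈ range p := by simp; omega
  have h2 : i - 1 ∈ (range p).erase (p-1) := by simp [Finset.mem_erase]; omega
  have h3 : p - i - 1 ∈ ((range p).erase (p-1)).erase (i-1) := by
    simp [Finset.mem_erase]; omega
  have ext : ∀ f : ℕ → ℕ,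
      ∏ t ∈ range p, f t
        = f (p-1) * (f (i-1) * (f (p-i-1) * ∏ t ∈ ((((range p).erase (p-1)).erase (i-1)).erase (p-i-1)), f t)) := by
    intro f
    rw [← Finset.mul_prod_erase _ f h1, ← Finset.mul_prod_erase _ f h2,
      ← Finset.mul_prod_erase _ f h3]
  rw [ext, ext]
  rw [show m + 1 + (p-1) = m + p by omega, show m + 1 + (i-1) = m + i by omega,
      show m + 1 + (p-i-1) = m + (p-i) by omega,
      show e + m + 1 + (p-1) = e + p + m by omega, show e + m + 1 + (i-1) = i + e + m by omega,
      show e + m + 1 + (p-i-1) = e + (p-i) + m by omega]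
  set T := (((range p).erase (p-1)).erase (i-1)).erase (p-i-1) with hT
  have hPT : (∏ t ∈ T, (m + 1 + t)) ≤ ∏ t ∈ T, (e + m + 1 + t) :=
    Finset.prod_le_prod (fun _ _ => Nat.zero_le _) (fun t _ => by omega)
  have hPTpos : 0 < ∏ t ∈ T, (e + m + 1 + t) := Finset.prod_pos fun t _ => by omega
  have hdist : Nat.dist e m < e + e + m := by simp [Nat.dist]; omega
  have hcore : (∏ t ∈ T, (m + 1 + t)) * Nat.dist e m < (∏ t ∈ T, (e + m + 1 + t)) * (e + e + m) :=
    calc (∏ t ∈ T, (m + 1 + t)) * Nat.dist e m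
        ≤ (∏ t ∈ T, (e + m + 1 + t)) * Nat.dist e m := Nat.mul_le_mul_right _ hPT
      _ < (∏ t ∈ T, (e + m + 1 + t)) * (e + e + m) := mul_lt_mul_of_pos_left hdist hPTpos
  have hcpos : 0 < (m+p) * ((m+i) * ((m + (p-i)) * ((e+p+m) * ((i+e+m) * (e + (p-i) + m))))) := by
    have hpi : 1 ≤ p - i := by omega
    positivity
  calc (m + p) * ((m + i) * ((m + (p-i)) * ∏ t ∈ T, (m + 1 + t))) * ((e + p + m) * ((e + (p - i) + m) * ((i + e + m) * Nat.dist e m)))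
      = ((m+p) * ((m+i) * ((m + (p-i)) * ((e+p+m) * ((i+e+m) * (e + (p-i) + m)))))) * ((∏ t ∈ T, (m + 1 + t)) * Nat.dist e m) := by ring
    _ < ((m+p) * ((m+i) * ((m + (p-i)) * ((e+p+m) * ((i+e+m) * (e + (p-i) + m)))))) * ((∏ t ∈ T, (e + m + 1 + t)) * (e + e + m)) := mul_lt_mul_of_pos_left hcore hcpos
    _ = (e + p + m) * ((i + e + m) * ((e + (p-i) + m) * ∏ t ∈ T, (e + m + 1 + t))) * ((e + e + m) * ((m + (p - i)) * ((p + m) * (i + m)))) := by ring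

lemma P1_pos (p i n m : ℕ) (hi1 : 1 ≤ i) : 0 < P1 p i n m :=
  Finset.prod_pos fun j _ => by omega

lemma P2_pos (p i n m : ℕ) (hp : 1 ≤ p) : 0 < P2 p i n m :=
  Finset.prod_pos fun j _ => by have : p*(j+1) = p*j + p := by ring
                                omega

lemma P3_pos (p i n m : ℕ) (hi1 : 1 ≤ i) : 0 < P3 p i n m :=
  Finset.prod_pos fun j _ => by omega

lemma Rf_pos (p i n m : ℕ) (hp : 1 ≤ p) (hi1 : 1 ≤ i) : 0 < Rf p i n m := by
  unfold Rf
  have := P1_pos p i n 0 hi1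
  have := P2_pos p i n m hp
  have := P3_pos p i n m hi1
  have := Nat.factorial_pos (i + p*n)
  have := Nat.factorial_pos m
  positivity

lemma step (p i n m : ℕ) (hp3 : 3 ≤ p) (hodd : Odd p) (hi1 : 1 ≤ i) (hi2 : i < p)
    (hnem : i + p*n ≠ m) (hLR : Rf p i n m ≤ Lf p i n m) :
    Rf p i n (m+p) < Lf p i n (m+p) := by
  have hdistpos : 0 < Nat.dist (i + p*n) m := by simp [Nat.dist]; omega
  have hRpos : 0 < Rf p i n m := Rf_pos p i n m (by omega) hi1
  have E1 : Lf p i n (m+p) * ((i + (i + p*n) + m) * Nat.dist (i + p*n) m)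
      = Lf p i n m * ((∏ t ∈ range p, ((i + p*n) + m + 1 + t)) *
          (((i + p*n) + (i + p*n) + m) * (m + (p - i)))) := by
    have f1 : ((i + p*n) + (m+p))! = ((i + p*n) + m)! * ∏ t ∈ range p, ((i + p*n) + m + 1 + t) := by
      rw [show (i + p*n) + (m+p) = ((i + p*n) + m) + p by ring, fact_shift]
    calc Lf p i n (m+p) * ((i + (i + p*n) + m) * Nat.dist (i + p*n) m)
        = ((i + p*n) + (m+p))! * ((P1 p i n (m+p) * (i + (i + p*n) + m)) *
            (P2 p i n 0 * (DD p i n (m+p) * Nat.dist (i + p*n) m))) := by unfold Lf; ring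
      _ = (((i + p*n) + m)! * ∏ t ∈ range p, ((i + p*n) + m + 1 + t)) *
            ((P1 p i n m * ((i + p*n) + (i + p*n) + m)) *
            (P2 p i n 0 * (DD p i n m * (m + (p - i))))) := by
          rw [f1, P1_shift, DD_shift p i n m (le_of_lt hi2)]
      _ = _ := by unfold Lf; ring
  have E2 : Rf p i n (m+p) * ((p + m) * (i + m))
      = Rf p i n m * ((∏ t ∈ range p, (m + 1 + t)) * ((i + p*(n+1) + m) * (p*(n+1) + m))) := by
    have f2 : (m+p)! = m ! * ∏ t ∈ range p, (m + 1 + t) := fact_shift m p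
    calc Rf p i n (m+p) * ((p + m) * (i + m))
        = (i + p*n)! * ((m+p)! * (P1 p i n 0 * ((P3 p i n (m+p) * (i + m)) *
            (P2 p i n (m+p) * (p + m))))) := by unfold Rf; ring
      _ = (i + p*n)! * ((m ! * ∏ t ∈ range p, (m + 1 + t)) * (P1 p i n 0 *
            ((P3 p i n m * (i + p*(n+1) + m)) * (P2 p i n m * (p*(n+1) + m))))) := by
          rw [f2, P3_shift, P2_shift]
      _ = _ := by unfold Rf; ring
  have eq1 : i + p*(n+1) + m = (i + p*n) + p + m := by ring
  have eq2 : p*(n+1) + m = (i + p*n) + (p - i) + m := by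
    have : p*(n+1) = p*n + p := by ring
    omega
  have R3 : ((∏ t ∈ range p, (m + 1 + t)) * ((i + p*(n+1) + m) * (p*(n+1) + m))) *
        ((i + (i + p*n) + m) * Nat.dist (i + p*n) m)
      < ((∏ t ∈ range p, ((i + p*n) + m + 1 + t)) * (((i + p*n) + (i + p*n) + m) * (m + (p - i)))) *
        ((p + m) * (i + m)) := by
    have hres := resid p i (i + p*n) m hp3 hodd hi1 hi2 (by omega)
    calc ((∏ t ∈ range p, (m + 1 + t)) * ((i + p*(n+1) + m) * (p*(n+1) + m))) *
          ((i + (i + p*n) + m) * Nat.dist (i + p*n) m)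
        = (∏ t ∈ range p, (m + 1 + t)) * (((i + p*n) + p + m) * (((i + p*n) + (p - i) + m) *
            ((i + (i + p*n) + m) * Nat.dist (i + p*n) m))) := by rw [eq1, eq2]; ring
      _ < (∏ t ∈ range p, ((i + p*n) + m + 1 + t)) * (((i + p*n) + (i + p*n) + m) *
            ((m + (p - i)) * ((p + m) * (i + m)))) := hres
      _ = _ := by ring
  have big : Rf p i n (m+p) * (((p + m) * (i + m)) * (((i + (i + p*n) + m) * Nat.dist (i + p*n) m) * Rf p i n m))
      < Lf p i n (m+p) * (((p + m) * (i + m)) * (((i + (i + p*n) + m) * Nat.dist (i + p*n) m) * Rf p i n m)) := by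
    calc Rf p i n (m+p) * (((p + m) * (i + m)) * (((i + (i + p*n) + m) * Nat.dist (i + p*n) m) * Rf p i n m))
        = Rf p i n m * ((((∏ t ∈ range p, (m + 1 + t)) * ((i + p*(n+1) + m) * (p*(n+1) + m))) *
            ((i + (i + p*n) + m) * Nat.dist (i + p*n) m)) * Rf p i n m) := by
          rw [show Rf p i n (m+p) * (((p + m) * (i + m)) * (((i + (i + p*n) + m) * Nat.dist (i + p*n) m) * Rf p i n m))
              = (Rf p i n (m+p) * ((p + m) * (i + m))) * (((i + (i + p*n) + m) * Nat.dist (i + p*n) m) * Rf p i n m) by ring,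
            E2]
          ring
      _ < Rf p i n m * ((((∏ t ∈ range p, ((i + p*n) + m + 1 + t)) *
            (((i + p*n) + (i + p*n) + m) * (m + (p - i)))) * ((p + m) * (i + m))) * Rf p i n m) := by
          apply mul_lt_mul_of_pos_left _ hRpos
          exact mul_lt_mul_of_pos_right R3 hRpos
      _ ≤ Lf p i n m * ((((∏ t ∈ range p, ((i + p*n) + m + 1 + t)) *
            (((i + p*n) + (i + p*n) + m) * (m + (p - i)))) * ((p + m) * (i + m))) * Rf p i n m) := by
          have h := Nat.mul_le_mul_right
            ((((∏ t ∈ range p, ((i + p*n) + m + 1 + t)) *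
              (((i + p*n) + (i + p*n) + m) * (m + (p - i)))) * ((p + m) * (i + m))) * Rf p i n m) hLR
          calc Rf p i n m * ((((∏ t ∈ range p, ((i + p*n) + m + 1 + t)) *
                (((i + p*n) + (i + p*n) + m) * (m + (p - i)))) * ((p + m) * (i + m))) * Rf p i n m)
              = Rf p i n m * (((∏ t ∈ range p, ((i + p*n) + m + 1 + t)) *
                (((i + p*n) + (i + p*n) + m) * (m + (p - i)))) * ((p + m) * (i + m))) * Rf p i n m := by ring
            _ ≤ Lf p i n m * (((∏ t ∈ range p, ((i + p*n) + m + 1 + t)) *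
                (((i + p*n) + (i + p*n) + m) * (m + (p - i)))) * ((p + m) * (i + m))) * Rf p i n m := by
                have := Nat.mul_le_mul_right
                  ((((∏ t ∈ range p, ((i + p*n) + m + 1 + t)) *
                    (((i + p*n) + (i + p*n) + m) * (m + (p - i)))) * ((p + m) * (i + m))) * Rf p i n m) hLR
                calc Rf p i n m * (((∏ t ∈ range p, ((i + p*n) + m + 1 + t)) *
                      (((i + p*n) + (i + p*n) + m) * (m + (p - i)))) * ((p + m) * (i + m))) * Rf p i n m
                    = Rf p i n m * ((((∏ t ∈ range p, ((i + p*n) + m + 1 + t)) *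
                      (((i + p*n) + (i + p*n) + m) * (m + (p - i)))) * ((p + m) * (i + m))) * Rf p i n m) := by ring
                  _ ≤ Lf p i n m * ((((∏ t ∈ range p, ((i + p*n) + m + 1 + t)) *
                      (((i + p*n) + (i + p*n) + m) * (m + (p - i)))) * ((p + m) * (i + m))) * Rf p i n m) := by
                      exact Nat.mul_le_mul_right _ hLR
                  _ = _ := by ring
            _ = _ := by ring
      _ = (Lf p i n m * ((∏ t ∈ range p, ((i + p*n) + m + 1 + t)) *
            (((i + p*n) + (i + p*n) + m) * (m + (p - i))))) *
            (((p + m) * (i + m)) * Rf p i n m) := by ring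
      _ = (Lf p i n (m+p) * ((i + (i + p*n) + m) * Nat.dist (i + p*n) m)) *
            (((p + m) * (i + m)) * Rf p i n m) := by rw [E1]
      _ = _ := by ring
  exact lt_of_mul_lt_mul_right big (Nat.zero_le _)

lemma LR0 (p i n : ℕ) : Lf p i n 0 = Rf p i n 0 := by
  have h : DD p i n 0 = P3 p i n 0 :=
    Finset.prod_congr rfl fun j _ => by rw [Nat.dist_zero_right, Nat.add_zero]
  unfold Lf Rf
  rw [h]
  simp [Nat.factorial]
  ring

lemma key (p i n w : ℕ) (hp3 : 3 ≤ p) (hodd : Odd p) (hi1 : 1 ≤ i) (hi2 : i < p)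
    (hw : 1 ≤ w) : Rf p i n (p*w) < Lf p i n (p*w) := by
  have main : ∀ w, Rf p i n (p*w) ≤ Lf p i n (p*w) ∧
      (1 ≤ w → Rf p i n (p*w) < Lf p i n (p*w)) := by
    intro w
    induction w with
    | zero =>
        constructor
        · rw [Nat.mul_zero, LR0]
        · omega
    | succ w ih =>
        have hnem : i + p*n ≠ p*w := by
          intro h
          have h1 : (i + p*n) % p = i % p := Nat.add_mul_mod_self_left i p n
          have h2 : (p*w) % p = 0 := Nat.mul_mod_right p w
          rw [h, h2, Nat.mod_eq_of_lt hi2] at h1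
          omega
        have hstep := step p i n (p*w) hp3 hodd hi1 hi2 hnem ih.1
        have hmul : p*(w+1) = p*w + p := by ring
        rw [hmul]
        exact ⟨le_of_lt hstep, fun _ => hstep⟩
  exact (main w).2 hw



lemma mem_unmixed {S : Finset ℕ} {x y : ℕ} (hy : y ∈ S) (hx : x ∉ S) (hxy : x < y) :
    (y - x) ∈ barLengths S := by
  rw [barLengths, Multiset.mem_add]
  left
  rw [unmixedBars, Multiset.mem_bind]
  refine ⟨y, by simpa using hy, ?_⟩
  rw [Multiset.mem_map]
  exact ⟨x, by simp [Finset.mem_filter, Finset.mem_range, hxy, hx], rfl⟩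

lemma down {p : ℕ} {X : Finset ℕ} (hcore : IsBarCore p X) {a : ℕ}
    (hp : 0 < p) (ha : a ∈ X) (hpa : p ≤ a) : a - p ∈ X := by
  by_contra h
  have hb := mem_unmixed ha h (by omega)
  rw [show a - (a - p) = p by omega] at hb
  exact hcore p hb dvd_rfl

lemma X_eq (p i : ℕ) (hp : 0 < p) (hi1 : 1 ≤ i) (hi2 : i < p) (X : Finset ℕ)
    (hne : X.Nonempty) (hcore : IsBarCore p X) (hall : ∀ a ∈ X, a % p = i) :
    ∃ n : ℕ, X = (range (n+1)).image (fun j => i + p*j) ∧ X.sup id = i + p*n := by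
  obtain ⟨b, hb, hbe⟩ := Finset.exists_mem_eq_sup X hne id
  have heX : X.sup id ∈ X := by rw [hbe]; exact hb
  have hmod : (X.sup id) % p = i := hall _ heX
  have hee : X.sup id = i + p * (X.sup id / p) := by
    conv_lhs => rw [← Nat.mod_add_div (X.sup id) p]
    rw [hmod]
  refine ⟨X.sup id / p, ?_, hee⟩
  have hdown : ∀ d, i + p * (X.sup id / p - d) ∈ X := by
    intro d
    induction d with
    | zero => rw [Nat.sub_zero, ← hee]; exact heX
    | succ d ih =>
        rcases Nat.lt_or_ge (X.sup id / p) (d+1) with hlt | hge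
        · have h0 : X.sup id / p - (d+1) = X.sup id / p - d := by omega
          rw [h0]; exact ih
        · have h1 : 1 ≤ X.sup id / p - d := by omega
          have hmul : p * (X.sup id / p - d) = p * (X.sup id / p - d - 1) + p := by
            calc p * (X.sup id / p - d) = p * ((X.sup id / p - d - 1) + 1) := by
                  rw [show X.sup id / p - d - 1 + 1 = X.sup id / p - d by omega]
              _ = p * (X.sup id / p - d - 1) + p := by ring
          have hmem := down hcore hp ih (by omega)
          rw [show i + p * (X.sup id / p - d) - p = i + p * (X.sup id / p - d - 1) by omega,
            show X.sup id / p - d - 1 = X.sup id / p - (d+1) by omega] at hmem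
          exact hmem
  ext a
  simp only [Finset.mem_image, Finset.mem_range]
  constructor
  · intro haX
    refine ⟨a / p, ?_, ?_⟩
    · have hae : a ≤ X.sup id := Finset.le_sup (f := id) haX
      have := Nat.div_le_div_right (c := p) hae
      omega
    · have h1 : a % p = i := hall a haX
      have h := Nat.mod_add_div a p
      omega
  · rintro ⟨j, hj, rfl⟩
    have h := hdown (X.sup id / p - j)
    rwa [show X.sup id / p - (X.sup id / p - j) = j by omega] at h


end S15

/-- If all parts of the nonempty `p̄`-core `γ` lie in the single residue class
`i` mod `p` (largest part `e`), then for every `w ≥ 1`,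
`H̄(λᵢ⁽ʷ⁾) > H̄(λ₀⁽ʷ⁾)`. -/


theorem stmt15 (p w i : ℕ) (hp : p.Prime) (hodd : Odd p) (X : Finset ℕ)
    (h0 : 0 ∉ X) (hne : X.Nonempty) (hcore : IsBarCore p X)
    (hi1 : 1 ≤ i) (hi2 : i ≤ p - 1) (hall : ∀ a ∈ X, a % p = i) (hw : 1 ≤ w)
    (e : ℕ) (he : e = X.sup id) :
    barProd (insert (e + p * w) (X.erase e)) > barProd (insert (p * w) X) := by
  classical
  have hp2 := hp.two_le
  have hp3 : 3 ≤ p := by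
    obtain ⟨c, hc⟩ := hodd
    omega
  have hi2' : i < p := by omega
  obtain ⟨n, hXeq, hsup⟩ := S15.X_eq p i (by omega) hi1 hi2' X hne hcore hall
  have he2 : e = i + p * n := by rw [he, hsup]
  subst he2
  set m := p * w with hm
  have hm3 : 3 ≤ m := by
    have : p * 1 ≤ p * w := Nat.mul_le_mul_left p hw
    omega
  set C : Finset ℕ := (range n).image (fun j => i + p * j) with hC
  have hp0 : 0 < p := by omega
  have hinj : ∀ a ∈ range (n+1), ∀ b ∈ range (n+1), i + p*a = i + p*b → a = b := by
    intro a _ b _ h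
    exact Nat.eq_of_mul_eq_mul_left hp0 (by omega)
  have hinjn : ∀ a ∈ range n, ∀ b ∈ range n, i + p*a = i + p*b → a = b := by
    intro a _ b _ h
    exact Nat.eq_of_mul_eq_mul_left hp0 (by omega)
  have hXC : X = insert (i + p*n) C := by
    rw [hXeq, Finset.range_add_one, Finset.image_insert]
  have heC : (i + p*n) ∉ C := by
    rw [hC]
    simp only [Finset.mem_image, Finset.mem_range]
    rintro ⟨j, hj, hji⟩
    have hj2 : j = n := Nat.eq_of_mul_eq_mul_left hp0 (by omega)
    omega
  have herase : X.erase (i + p*n) = C := by rw [hXC, Finset.erase_insert heC]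
  have hmX : m ∉ X := by
    intro h
    have h2 := hall m h
    rw [hm, Nat.mul_mod_right] at h2
    omega
  have hEC : (i + p*n) + m ∉ C := by
    intro h
    have hX' : (i + p*n) + m ∈ X := by rw [hXC]; exact Finset.mem_insert_of_mem h
    have h2 : (i + p*n) + m ≤ i + p*n := by
      have h3 := Finset.le_sup (f := id) hX'
      rw [hsup] at h3
      exact h3
    omega
  -- product computations over C and X
  have hCsum : ∀ z : ℕ, (∏ x ∈ C, (x + z)) = ∏ j ∈ range n, (i + p*j + z) := fun z => by
    rw [hC, Finset.prod_image hinjn]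
  have hXsum : (∏ x ∈ X, (x + m)) = S15.P3 p i n m := by
    rw [hXeq, Finset.prod_image hinj]
    rfl
  have hXdist : (∏ x ∈ X, Nat.dist x m) = S15.DD p i n m := by
    rw [hXeq, Finset.prod_image hinj]
    rfl
  have hCdist : ∀ z : ℕ, (∏ x ∈ C, Nat.dist x ((i + p*n) + z)) = S15.P2 p i n z := fun z => by
    rw [hC, Finset.prod_image hinjn]
    have h1 : ∀ j ∈ range n, Nat.dist (i + p*j) ((i + p*n) + z) = p*(n-j) + z := by
      intro j hj
      rw [Finset.mem_range] at hj
      have h2 : p*(j + (n-j)) = p*n := by rw [show j + (n-j) = n by omega]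
      rw [Nat.mul_add] at h2
      have hle : i + p*j ≤ (i + p*n) + z := by omega
      rw [Nat.dist_eq_sub_of_le hle]
      omega
    rw [Finset.prod_congr rfl h1]
    have h3 : ∏ j ∈ range n, (p*(n-1-j+1) + z) = ∏ j ∈ range n, (p*(j+1) + z) :=
      Finset.prod_range_reflect (fun j => p*(j+1) + z) n
    calc ∏ j ∈ range n, (p*(n-j) + z)
        = ∏ j ∈ range n, (p*(n-1-j+1) + z) := Finset.prod_congr rfl (fun j hj => by
            rw [Finset.mem_range] at hj
            rw [show n - j = n-1-j+1 by omega])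
      _ = ∏ j ∈ range n, (p*(j+1) + z) := h3
      _ = S15.P2 p i n z := rfl
  -- decompositions
  have hA1 : S15.fprod (insert ((i + p*n) + m) C) = ((i + p*n) + m)! * S15.fprod C :=
    S15.fprod_insert _ _ hEC
  have hA2 : S15.sprod (insert ((i + p*n) + m) C) = S15.sprod C * S15.P1 p i n m := by
    rw [S15.sprod_insert _ _ hEC, hCsum]
    congr 1
    unfold S15.P1
    exact Finset.prod_congr rfl fun j _ => by ring
  have hA3 : S15.dprod (insert ((i + p*n) + m) C) = S15.dprod C * S15.P2 p i n m := by
    rw [S15.dprod_insert _ _ hEC, hCdist]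
  have hX1 : S15.fprod X = (i + p*n)! * S15.fprod C := by
    rw [hXC, S15.fprod_insert _ _ heC]
  have hX2 : S15.sprod X = S15.sprod C * S15.P1 p i n 0 := by
    have hh : ∏ j ∈ range n, (i + p*j + (i + p*n)) = S15.P1 p i n 0 := by
      unfold S15.P1
      exact Finset.prod_congr rfl fun j _ => by ring
    rw [hXC, S15.sprod_insert _ _ heC, hCsum, hh]
  have hX3 : S15.dprod X = S15.dprod C * S15.P2 p i n 0 := by
    rw [hXC, S15.dprod_insert _ _ heC]
    congr 1
    rw [← hCdist 0]
    exact Finset.prod_congr rfl fun x _ => by rw [Nat.add_zero]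
  have hB1 : S15.fprod (insert m X) = m ! * ((i + p*n)! * S15.fprod C) := by
    rw [S15.fprod_insert _ _ hmX, hX1]
  have hB2 : S15.sprod (insert m X) = (S15.sprod C * S15.P1 p i n 0) * S15.P3 p i n m := by
    rw [S15.sprod_insert _ _ hmX, hX2, hXsum]
  have hB3 : S15.dprod (insert m X) = (S15.dprod C * S15.P2 p i n 0) * S15.DD p i n m := by
    rw [S15.dprod_insert _ _ hmX, hX3, hXdist]
  -- main comparison
  have hFA := S15.barProd_formula (insert ((i + p*n) + m) C)
  have hFB := S15.barProd_formula (insert m X)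
  have hkey := S15.key p i n w hp3 hodd hi1 hi2' hw
  rw [← hm] at hkey
  have hKK : 0 < S15.fprod C * S15.sprod C * S15.dprod C :=
    Nat.mul_pos (Nat.mul_pos (S15.fprod_pos C) (S15.sprod_pos C)) (S15.dprod_pos C)
  have hLA : S15.fprod (insert ((i + p*n) + m) C) * S15.sprod (insert ((i + p*n) + m) C) *
      S15.dprod (insert m X) = (S15.fprod C * S15.sprod C * S15.dprod C) * S15.Lf p i n m := by
    rw [hA1, hA2, hB3]
    unfold S15.Lf
    ring
  have hRB : S15.fprod (insert m X) * S15.sprod (insert m X) *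
      S15.dprod (insert ((i + p*n) + m) C) =
      (S15.fprod C * S15.sprod C * S15.dprod C) * S15.Rf p i n m := by
    rw [hB1, hB2, hA3]
    unfold S15.Rf
    ring
  rw [gt_iff_lt, herase]
  have big : barProd (insert m X) *
        (S15.dprod (insert m X) * S15.dprod (insert ((i + p*n) + m) C))
      < barProd (insert ((i + p*n) + m) C) *
        (S15.dprod (insert m X) * S15.dprod (insert ((i + p*n) + m) C)) := by
    calc barProd (insert m X) * (S15.dprod (insert m X) * S15.dprod (insert ((i + p*n) + m) C))
        = (barProd (insert m X) * S15.dprod (insert m X)) * S15.dprod (insert ((i + p*n) + m) C) := by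
          ring
      _ = S15.fprod (insert m X) * S15.sprod (insert m X) * S15.dprod (insert ((i + p*n) + m) C) := by
          rw [hFB]
      _ = (S15.fprod C * S15.sprod C * S15.dprod C) * S15.Rf p i n m := hRB
      _ < (S15.fprod C * S15.sprod C * S15.dprod C) * S15.Lf p i n m :=
          mul_lt_mul_of_pos_left hkey hKK
      _ = S15.fprod (insert ((i + p*n) + m) C) * S15.sprod (insert ((i + p*n) + m) C) *
          S15.dprod (insert m X) := hLA.symm
      _ = (barProd (insert ((i + p*n) + m) C) * S15.dprod (insert ((i + p*n) + m) C)) *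
          S15.dprod (insert m X) := by rw [hFA]
      _ = barProd (insert ((i + p*n) + m) C) *
          (S15.dprod (insert m X) * S15.dprod (insert ((i + p*n) + m) C)) := by ring
  exact lt_of_mul_lt_mul_right big (Nat.zero_le _)
end

section
/- Let p be an odd prime, γ a nonempty p̄-core, and w ≥ 2. Define λ_0^(w) with part set X_γ ∪ {pw} and λ_0^(w−1) with part set X_γ ∪ {p(w−1)}. Then the ratio of products of unmixed bar lengths satisfies H̄_u(λ_0^(w))/H̄_u(λ_0^(w−1)) = pw · ∏_{1 ≤ j ≤ p−1} |p(w−1) − e_j|, where e_j is the largest part of γ congruent to j mod p if one exists, and e_j = j − p otherwise. -/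
/-!
On the `p`-abacus, the parts of a `p̄`-core `X` with `0 ∉ X` on runner `j` are exactly the
positions below a first gap `t_j = e_j + p` (the core is closed under `a ↦ a - p`). Adding a part
`M ∉ X` multiplies the product of unmixed bar lengths by `∏ (M - x)` over the gaps `x < M` and
divides it by `∏ (y - M)` over the parts `y > M`. Comparing `M = p(w-1)` with `M + p` runner by
runner, the shift by `p` matches all these factors except one on each runner, namely
`|M + p - t_j| = |p(w-1) - e_j|`; on runner `0` it is `pw`.
-/

open Finset Nat

section Runner

variable {p t M : ℕ}

/-- On the `p`-abacus, `t` plays the first gap of its runner: the positions `≡ t` below `t` are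
the parts, those from `t` on are the gaps. -/
def gapProd (p t M : ℕ) : ℕ := ∏ x ∈ (Ico t M).filter (· ≡ t [MOD p]), (M - x)

def partProd (p t M : ℕ) : ℕ := ∏ x ∈ (Ioo M t).filter (· ≡ t [MOD p]), (x - M)

theorem gapProd_of_le (h : M ≤ t) : gapProd p t M = 1 := by
  rw [gapProd, Ico_eq_empty_of_le h, filter_empty, prod_empty]

theorem partProd_of_le (h : t ≤ M + p) : partProd p t M = 1 := by
  refine prod_eq_one fun x hx => ?_
  obtain ⟨hx, hxt⟩ := mem_filter.mp hx
  obtain ⟨hMx, hxt'⟩ := mem_Ioo.mp hx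
  have := hxt.add_le_of_lt hxt'
  omega

theorem gapProd_add_right (hp : 0 < p) (h : t < M + p) :
    gapProd p t (M + p) = (M + p - t) * gapProd p t M := by
  have hset : (Ico t (M + p)).filter (· ≡ t [MOD p])
      = insert t (((Ico t M).filter (· ≡ t [MOD p])).map (addRightEmbedding p)) := by
    ext x
    simp only [mem_insert, mem_map, mem_filter, mem_Ico, addRightEmbedding_apply]
    constructor
    · rintro ⟨⟨htx, hxM⟩, hxt⟩
      rcases htx.eq_or_lt with rfl | htx
      · exact .inl rfl
      · have := hxt.symm.add_le_of_lt htx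
        refine .inr ⟨x - p, ⟨⟨by omega, by omega⟩, ?_⟩, by omega⟩
        exact Nat.add_modEq_right.symm.trans (by rwa [Nat.sub_add_cancel (by omega)])
    · rintro (rfl | ⟨a, ⟨⟨hta, haM⟩, hat⟩, rfl⟩)
      · exact ⟨⟨le_rfl, h⟩, rfl⟩
      · exact ⟨⟨by omega, by omega⟩, Nat.add_modEq_right.trans hat⟩
  have ht : t ∉ ((Ico t M).filter (· ≡ t [MOD p])).map (addRightEmbedding p) := by
    simp only [mem_map, mem_filter, mem_Ico, addRightEmbedding_apply]
    omega
  rw [gapProd, hset, prod_insert ht, prod_map, gapProd]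
  congr 1
  exact prod_congr rfl fun x _ => by simp only [addRightEmbedding_apply]; omega

theorem partProd_eq_mul_partProd_add (hp : 0 < p) (h : M + p < t) :
    partProd p t M = (t - (M + p)) * partProd p t (M + p) := by
  have htop : t - p ∈ (Ioo M t).filter (· ≡ t [MOD p]) :=
    mem_filter.mpr ⟨mem_Ioo.mpr ⟨by omega, by omega⟩,
      Nat.add_modEq_right.symm.trans (by rw [Nat.sub_add_cancel (by omega)])⟩
  have hset : (Ioo (M + p) t).filter (· ≡ t [MOD p])
      = (((Ioo M t).filter (· ≡ t [MOD p])).erase (t - p)).map (addRightEmbedding p) := by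
    ext x
    simp only [mem_map, mem_erase, mem_filter, mem_Ioo, addRightEmbedding_apply]
    constructor
    · rintro ⟨⟨hMx, hxt⟩, hxt'⟩
      refine ⟨x - p, ⟨by omega, ⟨by omega, by omega⟩, ?_⟩, by omega⟩
      exact Nat.add_modEq_right.symm.trans (by rwa [Nat.sub_add_cancel (by omega)])
    · rintro ⟨a, ⟨hat, ⟨hMa, hta⟩, hat'⟩, rfl⟩
      have := hat'.add_le_of_lt hta
      exact ⟨⟨by omega, by omega⟩, Nat.add_modEq_right.trans hat'⟩
  rw [partProd, ← mul_prod_erase _ _ htop, partProd, hset, prod_map]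
  congr 1
  · omega
  · exact prod_congr rfl fun x _ => by simp only [addRightEmbedding_apply]; omega

theorem gapProd_add_mul_partProd (hp : 0 < p) (ht : t ≠ M + p) :
    gapProd p t (M + p) * partProd p t M
      = ((M + p : ℕ) - (t : ℤ)).natAbs * (gapProd p t M * partProd p t (M + p)) := by
  rcases lt_or_gt_of_ne ht with ht | ht
  · rw [gapProd_add_right hp ht, partProd_of_le ht.le, partProd_of_le (by omega)]
    have : ((M + p : ℕ) - (t : ℤ)).natAbs = M + p - t := by omega
    rw [this]; ring
  · rw [gapProd_of_le ht.le, gapProd_of_le (by omega), partProd_eq_mul_partProd_add hp ht]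
    have : ((M + p : ℕ) - (t : ℤ)).natAbs = t - (M + p) := by omega
    rw [this]; ring

end Runner

theorem sub_mem_barLengths {X : Finset ℕ} {x y : ℕ} (hy : y ∈ X) (hx : x ∉ X) (hxy : x < y) :
    y - x ∈ barLengths X :=
  Multiset.mem_add.mpr <| .inl <| Multiset.mem_bind.mpr
    ⟨y, hy, Multiset.mem_map.mpr ⟨x, by simp [hx, hxy], rfl⟩⟩

/-- `e_j + p` in the notation of the statement: for a `p̄`-core, the least non-part `≡ j [MOD p]`. -/
def firstGap (p : ℕ) (X : Finset ℕ) (j : ℕ) : ℕ :=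
  if (X.filter (fun a => a % p = j)).Nonempty
    then (X.filter (fun a => a % p = j)).sup id + p else j

theorem firstGap_mod {p : ℕ} (X : Finset ℕ) {j : ℕ} (hj : j < p) : firstGap p X j % p = j := by
  unfold firstGap
  split_ifs with hne
  · obtain ⟨n, hn, hns⟩ := exists_mem_eq_sup _ hne id
    rw [hns, id, Nat.add_mod_right]
    exact (mem_filter.mp hn).2
  · exact Nat.mod_eq_of_lt hj

namespace IsBarCore

variable {p : ℕ} {X : Finset ℕ}

theorem not_dvd (hcore : IsBarCore p X) (h0 : 0 ∉ X) {a : ℕ} (ha : a ∈ X) : ¬ p ∣ a := by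
  have hpos : 0 < a := Nat.pos_of_ne_zero fun h => h0 (h ▸ ha)
  simpa using hcore _ (sub_mem_barLengths ha h0 hpos)

theorem sub_mem (hcore : IsBarCore p X) (hp : 0 < p) {a : ℕ} (ha : a ∈ X) (hpa : p < a) :
    a - p ∈ X := by
  by_contra hnot
  have hbar := sub_mem_barLengths ha hnot (by omega)
  rw [Nat.sub_sub_self hpa.le] at hbar
  exact hcore _ hbar dvd_rfl

theorem mem_of_add_mul_mem (hcore : IsBarCore p X) (hp : 0 < p) {b : ℕ} (hb : 0 < b) :
    ∀ {k : ℕ}, b + p * k ∈ X → b ∈ X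
  | 0, h => by simpa using h
  | k + 1, h => mem_of_add_mul_mem hcore hp hb <| by
      simpa [Nat.mul_succ, ← add_assoc] using hcore.sub_mem hp h (by nlinarith)

theorem mem_of_modEq_of_le (hcore : IsBarCore p X) (hp : 0 < p) {a b : ℕ} (ha : a ∈ X)
    (hba : b ≡ a [MOD p]) (hb : 0 < b) (hle : b ≤ a) : b ∈ X := by
  obtain ⟨k, hk⟩ := (Nat.modEq_iff_dvd' hle).mp hba
  exact hcore.mem_of_add_mul_mem hp hb (k := k) (by rwa [← hk, Nat.add_sub_cancel' hle])

theorem firstGap_zero (hcore : IsBarCore p X) (h0 : 0 ∉ X) : firstGap p X 0 = 0 := by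
  refine if_neg fun ⟨a, ha⟩ => ?_
  obtain ⟨haX, hap⟩ := mem_filter.mp ha
  exact hcore.not_dvd h0 haX (Nat.dvd_of_mod_eq_zero hap)

theorem mem_iff_lt_firstGap (hcore : IsBarCore p X) (hp : 0 < p) (h0 : 0 ∉ X) {x : ℕ} :
    x ∈ X ↔ x < firstGap p X (x % p) := by
  unfold firstGap
  split_ifs with hne
  · obtain ⟨n, hn, hns⟩ := exists_mem_eq_sup _ hne id
    obtain ⟨hnX, hnx⟩ := mem_filter.mp hn
    rw [hns]
    constructor
    · intro hx
      have := le_sup (f := id) (s := X.filter (fun a => a % p = x % p)) (mem_filter.mpr ⟨hx, rfl⟩)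
      rw [hns] at this
      exact lt_add_of_le_of_pos this hp
    · intro hx
      have hxn : x ≤ n := Nat.ModEq.le_of_lt_add hnx.symm hx
      have hx0 : 0 < x := Nat.pos_of_ne_zero fun h => by
        subst h
        exact hcore.not_dvd h0 hnX (Nat.dvd_of_mod_eq_zero (by simpa using hnx))
      exact hcore.mem_of_modEq_of_le hp hnX hnx.symm hx0 hxn
  · exact iff_of_false (fun hx => hne ⟨x, mem_filter.mpr ⟨hx, rfl⟩⟩)
      (Nat.mod_le x p).not_gt

end IsBarCore

theorem prod_unmixedBars (X : Finset ℕ) :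
    (unmixedBars X).prod = ∏ y ∈ X, ∏ x ∈ (range y).filter (· ∉ X), (y - x) := by
  rw [unmixedBars, Multiset.prod_bind]
  rfl

def gapsBelow (X : Finset ℕ) (M : ℕ) : ℕ := ∏ x ∈ (range M).filter (· ∉ X), (M - x)

def partsAbove (X : Finset ℕ) (M : ℕ) : ℕ := ∏ y ∈ X.filter (M < ·), (y - M)

theorem gapsBelow_pos (X : Finset ℕ) (M : ℕ) : 0 < gapsBelow X M :=
  prod_pos fun x hx => by simp only [mem_filter, mem_range] at hx; omega

theorem partsAbove_pos (X : Finset ℕ) (M : ℕ) : 0 < partsAbove X M :=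
  prod_pos fun y hy => by simp only [mem_filter] at hy; omega

theorem prod_unmixedBars_insert_mul {X : Finset ℕ} {M : ℕ} (hM : M ∉ X) :
    (unmixedBars (insert M X)).prod * partsAbove X M = gapsBelow X M * (unmixedBars X).prod := by
  have hgaps : ∀ y, (range y).filter (· ∉ insert M X) = ((range y).filter (· ∉ X)).erase M := by
    intro y
    ext x
    simp only [mem_erase, mem_filter, mem_range, mem_insert, not_or]
    tauto
  have hbelow : ((range M).filter (· ∉ X)).erase M = (range M).filter (· ∉ X) :=
    erase_eq_of_notMem (by simp)
  rw [prod_unmixedBars, prod_unmixedBars, prod_insert hM, hgaps, hbelow, mul_assoc, gapsBelow]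
  congr 1
  rw [partsAbove, prod_filter, ← prod_mul_distrib]
  refine prod_congr rfl fun y _ => ?_
  split_ifs with hMy
  · rw [hgaps, mul_comm, mul_prod_erase _ _ (by simp [hMy, hM])]
  · rw [hgaps, mul_one, erase_eq_of_notMem fun h => hMy (mem_range.mp (mem_filter.mp h).1)]

theorem prod_unmixedBars_insert_mul_comm {X : Finset ℕ} {M N : ℕ} (hM : M ∉ X) (hN : N ∉ X) :
    (unmixedBars (insert N X)).prod * (gapsBelow X M * partsAbove X N)
      = (unmixedBars (insert M X)).prod * (gapsBelow X N * partsAbove X M) := by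
  have hM' := prod_unmixedBars_insert_mul hM
  have hN' := prod_unmixedBars_insert_mul hN
  calc _ = gapsBelow X M * ((unmixedBars (insert N X)).prod * partsAbove X N) := by ring
    _ = gapsBelow X N * ((unmixedBars (insert M X)).prod * partsAbove X M) := by
      rw [hN', hM']; ring
    _ = _ := by ring

namespace IsBarCore

variable {p : ℕ} {X : Finset ℕ}

theorem gapsBelow_eq_prod_gapProd (hcore : IsBarCore p X) (hp : 0 < p) (h0 : 0 ∉ X) (M : ℕ) :
    gapsBelow X M = ∏ j ∈ range p, gapProd p (firstGap p X j) M := by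
  rw [gapsBelow, ← prod_fiberwise_of_maps_to (g := (· % p)) (t := range p)
    fun x _ => mem_range.mpr (Nat.mod_lt x hp)]
  refine prod_congr rfl fun j hj => prod_congr ?_ fun _ _ => rfl
  ext x
  have hj := firstGap_mod X (mem_range.mp hj)
  simp only [mem_filter, mem_range, mem_Ico, Nat.ModEq, hj, hcore.mem_iff_lt_firstGap hp h0]
  constructor
  · rintro ⟨⟨hxM, hx⟩, rfl⟩
    exact ⟨⟨not_lt.mp hx, hxM⟩, rfl⟩
  · rintro ⟨⟨hx, hxM⟩, rfl⟩
    exact ⟨⟨hxM, not_lt.mpr hx⟩, rfl⟩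

theorem partsAbove_eq_prod_partProd (hcore : IsBarCore p X) (hp : 0 < p) (h0 : 0 ∉ X) (M : ℕ) :
    partsAbove X M = ∏ j ∈ range p, partProd p (firstGap p X j) M := by
  rw [partsAbove, ← prod_fiberwise_of_maps_to (g := (· % p)) (t := range p)
    fun x _ => mem_range.mpr (Nat.mod_lt x hp)]
  refine prod_congr rfl fun j hj => prod_congr ?_ fun _ _ => rfl
  ext x
  have hj := firstGap_mod X (mem_range.mp hj)
  simp only [mem_filter, mem_Ioo, Nat.ModEq, hj, hcore.mem_iff_lt_firstGap hp h0]
  constructor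
  · rintro ⟨⟨hx, hMx⟩, rfl⟩
    exact ⟨⟨hMx, hx⟩, rfl⟩
  · rintro ⟨⟨hMx, hx⟩, rfl⟩
    exact ⟨⟨hx, hMx⟩, rfl⟩

theorem gapsBelow_add_mul_partsAbove (hcore : IsBarCore p X) (hp : 0 < p) (h0 : 0 ∉ X) {M : ℕ}
    (hM : p ∣ M) :
    gapsBelow X (M + p) * partsAbove X M
      = (∏ j ∈ range p, ((M + p : ℕ) - (firstGap p X j : ℤ)).natAbs)
        * (gapsBelow X M * partsAbove X (M + p)) := by
  have hgap : ∀ j ∈ range p, firstGap p X j ≠ M + p := by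
    intro j hj hjM
    have hj0 : j = 0 := by
      rw [← firstGap_mod X (mem_range.mp hj), hjM, Nat.add_mod_right]
      exact Nat.mod_eq_zero_of_dvd hM
    rw [hj0, hcore.firstGap_zero h0] at hjM
    omega
  simp only [hcore.gapsBelow_eq_prod_gapProd hp h0, hcore.partsAbove_eq_prod_partProd hp h0,
    ← prod_mul_distrib]
  exact prod_congr rfl fun j hj => gapProd_add_mul_partProd hp (hgap j hj)

end IsBarCore

theorem stmt19_general (p w : ℕ) (hp : p.Prime) (X : Finset ℕ)
    (h0 : 0 ∉ X) (hcore : IsBarCore p X) (hw : 2 ≤ w) :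
    let e : ℕ → ℤ := fun j =>
      if (X.filter (fun a => a % p = j)).Nonempty
        then (((X.filter (fun a => a % p = j)).sup id : ℕ) : ℤ) else (j : ℤ) - p
    (unmixedBars (insert (p * w) X)).prod
      = (unmixedBars (insert (p * (w - 1)) X)).prod
        * (p * w * ∏ j ∈ Finset.Icc 1 (p - 1),
            (((p * (w - 1) : ℕ) : ℤ) - e j).natAbs) := by
  intro e
  set m := p * (w - 1)
  have hpw : p * w = m + p := by rw [← Nat.mul_succ]; congr; omega
  have hmX : m ∉ X := fun h => hcore.not_dvd h0 h (dvd_mul_right p _)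
  have hmpX : m + p ∉ X := fun h => hcore.not_dvd h0 h (hpw ▸ dvd_mul_right p w)
  have he : ∀ j, (m : ℤ) - e j = ((m + p : ℕ) : ℤ) - firstGap p X j := by
    intro j
    simp only [e, firstGap]
    split_ifs <;> push_cast <;> ring
  have hrange : range p = insert 0 (Icc 1 (p - 1)) := by
    ext j
    simp only [mem_range, mem_insert, mem_Icc]
    have := hp.pos
    omega
  rw [hpw]
  refine Nat.eq_of_mul_eq_mul_right (mul_pos (gapsBelow_pos X m) (partsAbove_pos X (m + p))) ?_
  rw [prod_unmixedBars_insert_mul_comm hmX hmpX,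
    hcore.gapsBelow_add_mul_partsAbove hp.pos h0 (dvd_mul_right p _), hrange,
    prod_insert (by simp), hcore.firstGap_zero h0]
  simp only [he, Nat.cast_zero, sub_zero, Int.natAbs_natCast]
  ring

/-- For a nonempty `p̄`-core `γ` and `w ≥ 2`, the ratio of products of unmixed
bar lengths of `λ₀⁽ʷ⁾` and `λ₀⁽ʷ⁻¹⁾` is `pw · ∏_{1 ≤ j ≤ p-1} |p(w-1) - e_j|`,
where `e_j` is the largest part of `γ` in class `j` mod `p`, or `j - p` if none. -/
theorem stmt19 (p w : ℕ) (hp : p.Prime) (hodd : Odd p) (X : Finset ℕ)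
    (h0 : 0 ∉ X) (hne : X.Nonempty) (hcore : IsBarCore p X) (hw : 2 ≤ w) :
    let e : ℕ → ℤ := fun j =>
      if (X.filter (fun a => a % p = j)).Nonempty
        then (((X.filter (fun a => a % p = j)).sup id : ℕ) : ℤ) else (j : ℤ) - p
    (unmixedBars (insert (p * w) X)).prod
      = (unmixedBars (insert (p * (w - 1)) X)).prod
        * (p * w * ∏ j ∈ Finset.Icc 1 (p - 1),
            (((p * (w - 1) : ℕ) : ℤ) - e j).natAbs) :=
  stmt19_general p w hp X h0 hcore hw
end
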